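/- arXiv:2505.15311 — 2 statements merged into one kernel-verified Lean document; each statement's English description precedes it below -/
import Mathlib

section
/- Second-moment trajectory decomposition: For any policy μ and any functions f_h : S_h × A → ℝ (1 ≤ h ≤ H), with f̄ defined by the backward recursion below and trajectories extended by s_{H+1} ∼ P_H(s_H, a_H), one has E_μ[(Σ_{h=1}^H f_h(s_h,a_h))²] = E_μ[ f̄_1(s_1)² + Σ_{h=1}^H ( f_h(s_h,a_h) + f̄_{h+1}(s_{h+1}) − f̄_h(s_h) )² ]. -/
open Finset

namespace TBRM

/-- `p` is a probability mass function on a finite type. -/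
def IsPMF {X : Type*} [Fintype X] (p : X → ℝ) : Prop :=
  (∀ x, 0 ≤ p x) ∧ ∑ x, p x = 1

/-- χ²-divergence between pmfs on a finite type. -/
noncomputable def chiSq {X : Type*} [Fintype X] (p q : X → ℝ) : ℝ :=
  (∑ x, p x ^ 2 / q x) - 1

variable {H : ℕ} {S : Fin (H + 1) → Type*} {A : Type*}
variable [∀ i, Fintype (S i)] [∀ i, DecidableEq (S i)] [Fintype A] [DecidableEq A]

/-- Density of a full trajectory (including the extra final state `s_{H+1}`),
under initial distribution `ρ`, transition kernels `P`, and policy `π`. -/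
noncomputable def trajDensity (ρ : S 0 → ℝ)
    (P : ∀ h : Fin H, S h.castSucc → A → S h.succ → ℝ)
    (π : ∀ h : Fin H, S h.castSucc → A → ℝ)
    (s : ∀ i : Fin (H + 1), S i) (a : Fin H → A) : ℝ :=
  ρ (s 0) * ∏ h : Fin H, (π h (s h.castSucc) (a h) * P h (s h.castSucc) (a h) (s h.succ))

/-- Expectation of a trajectory functional under policy `π`. -/
noncomputable def expTraj (ρ : S 0 → ℝ)
    (P : ∀ h : Fin H, S h.castSucc → A → S h.succ → ℝ)
    (π : ∀ h : Fin H, S h.castSucc → A → ℝ)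
    (f : (∀ i : Fin (H + 1), S i) → (Fin H → A) → ℝ) : ℝ :=
  ∑ s : ∀ i : Fin (H + 1), S i, ∑ a : Fin H → A, trajDensity ρ P π s a * f s a

/-- Step-`h` occupancy measure `d_h^π(x,b)`. -/
noncomputable def occ (ρ : S 0 → ℝ)
    (P : ∀ h : Fin H, S h.castSucc → A → S h.succ → ℝ)
    (π : ∀ h : Fin H, S h.castSucc → A → ℝ)
    (h : Fin H) (x : S h.castSucc) (b : A) : ℝ :=
  expTraj ρ P π (fun s a => if s h.castSucc = x ∧ a h = b then 1 else 0)


/-- The backward recursion `f̄`: `f̄_{H+1} ≡ 0` on the last layer, and for a step `h`,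
`f̄_h(s) := E_{a∼μ_h(·|s)}[ f_h(s,a) + E_{s'∼P_h(s,a)}[ f̄_{h+1}(s') ] ]`. -/
noncomputable def fbar
    (P : ∀ h : Fin H, S h.castSucc → A → S h.succ → ℝ)
    (μ : ∀ h : Fin H, S h.castSucc → A → ℝ)
    (f : ∀ h : Fin H, S h.castSucc → A → ℝ) :
    ∀ i : Fin (H + 1), S i → ℝ :=
  Fin.reverseInduction (fun _ => 0)
    (fun h rec s => ∑ a : A, μ h s a * (f h s a + ∑ s' : S h.succ, P h s a s' * rec s'))


set_option linter.unusedSectionVars false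
set_option maxHeartbeats 1000000

universe u

lemma sum_pi_succ {n : ℕ} (α : Fin (n+1) → Type u) [∀ i, Fintype (α i)]
    (g : (∀ i, α i) → ℝ) :
    ∑ s, g s = ∑ x : α 0, ∑ t : ∀ i : Fin n, α i.succ, g (Fin.cons x t) := by
  rw [← Equiv.sum_comp (Fin.consEquiv α) g, Fintype.sum_prod_type]
  rfl

lemma sum_fn_succ {n : ℕ} (g : (Fin (n+1) → A) → ℝ) :
    ∑ a, g a = ∑ b : A, ∑ t : Fin n → A, g (Fin.cons b t) :=
  sum_pi_succ (fun _ => A) g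

lemma sum_pi_empty (α : Fin 0 → Type u) [∀ i, Fintype (α i)] (g : (∀ i, α i) → ℝ) :
    ∑ t, g t = g finZeroElim :=
  Fintype.sum_subsingleton _ _

lemma sum_fn_empty (g : (Fin 0 → A) → ℝ) : ∑ a, g a = g finZeroElim :=
  Fintype.sum_subsingleton _ _

lemma cons_succ_castSucc {n : ℕ} {α : Fin (n+2) → Sort u} (x : α 0)
    (p : ∀ i : Fin (n+1), α i.succ) (j : Fin n) :
    Fin.cons x p (j.succ).castSucc = p j.castSucc :=
  Fin.cons_succ x p j.castSucc

lemma fbar_last (P : ∀ h : Fin H, S h.castSucc → A → S h.succ → ℝ)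
    (μ : ∀ h : Fin H, S h.castSucc → A → ℝ)
    (f : ∀ h : Fin H, S h.castSucc → A → ℝ) :
    fbar P μ f (Fin.last H) = fun _ => 0 :=
  Fin.reverseInduction_last

lemma fbar_castSucc (P : ∀ h : Fin H, S h.castSucc → A → S h.succ → ℝ)
    (μ : ∀ h : Fin H, S h.castSucc → A → ℝ)
    (f : ∀ h : Fin H, S h.castSucc → A → ℝ) (h : Fin H) (s : S h.castSucc) :
    fbar P μ f h.castSucc s
      = ∑ a : A, μ h s a * (f h s a + ∑ s' : S h.succ, P h s a s' * fbar P μ f h.succ s') := by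
  unfold fbar
  rw [Fin.reverseInduction_castSucc]

lemma expTraj_add (ρ : S 0 → ℝ)
    (P : ∀ h : Fin H, S h.castSucc → A → S h.succ → ℝ)
    (μ : ∀ h : Fin H, S h.castSucc → A → ℝ)
    (F G : (∀ i : Fin (H + 1), S i) → (Fin H → A) → ℝ) :
    expTraj ρ P μ (fun s a => F s a + G s a) = expTraj ρ P μ F + expTraj ρ P μ G := by
  unfold expTraj
  rw [← Finset.sum_add_distrib]
  refine Finset.sum_congr rfl fun s _ => ?_
  rw [← Finset.sum_add_distrib]
  exact Finset.sum_congr rfl fun a _ => by ring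

lemma expTraj_mul (ρ : S 0 → ℝ)
    (P : ∀ h : Fin H, S h.castSucc → A → S h.succ → ℝ)
    (μ : ∀ h : Fin H, S h.castSucc → A → ℝ)
    (c : ℝ) (F : (∀ i : Fin (H + 1), S i) → (Fin H → A) → ℝ) :
    expTraj ρ P μ (fun s a => c * F s a) = c * expTraj ρ P μ F := by
  unfold expTraj
  rw [Finset.mul_sum]
  refine Finset.sum_congr rfl fun s _ => ?_
  rw [Finset.mul_sum]
  exact Finset.sum_congr rfl fun a _ => by ring

section Peel
variable {H : ℕ}

lemma expTraj_peel (S : Fin (H+2) → Type u) [∀ i, Fintype (S i)] [∀ i, DecidableEq (S i)]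
    (ρ : S 0 → ℝ)
    (P : ∀ h : Fin (H+1), S h.castSucc → A → S h.succ → ℝ)
    (μ : ∀ h : Fin (H+1), S h.castSucc → A → ℝ)
    (F : (∀ i : Fin (H+2), S i) → (Fin (H+1) → A) → ℝ) :
    expTraj ρ P μ F =
      ∑ x : S 0, ∑ b : A, ρ x * μ 0 x b *
        expTraj (S := fun i : Fin (H+1) => S i.succ) (P 0 x b)
          (fun h => P h.succ) (fun h => μ h.succ)
          (fun s' a' => F (Fin.cons x s') (Fin.cons b a')) := by
  unfold expTraj trajDensity
  rw [sum_pi_succ S]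
  simp only [sum_fn_succ]
  simp only [Fin.prod_univ_succ]
  simp only [Fin.cons_zero, Fin.cons_succ, cons_succ_castSucc, Fin.castSucc_zero]
  refine Finset.sum_congr rfl fun x _ => ?_
  rw [Finset.sum_comm]
  refine Finset.sum_congr rfl fun b _ => ?_
  rw [Finset.mul_sum]
  refine Finset.sum_congr rfl fun t _ => ?_
  rw [Finset.mul_sum]
  refine Finset.sum_congr rfl fun a _ => ?_
  ring

lemma fbar_shift (S : Fin (H+2) → Type u) [∀ i, Fintype (S i)] [∀ i, DecidableEq (S i)]
    (P : ∀ h : Fin (H+1), S h.castSucc → A → S h.succ → ℝ)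
    (μ : ∀ h : Fin (H+1), S h.castSucc → A → ℝ)
    (f : ∀ h : Fin (H+1), S h.castSucc → A → ℝ) (i : Fin (H+1)) :
    fbar (S := fun j : Fin (H+1) => S j.succ) (fun h => P h.succ) (fun h => μ h.succ)
        (fun h => f h.succ) i
      = fun s => fbar P μ f i.succ s := by
  induction i using Fin.reverseInduction with
  | last =>
    rw [fbar_last]
    funext s
    have h2 : fbar P μ f (Fin.last H).succ = fun _ => (0:ℝ) := fbar_last P μ f
    rw [h2]
  | cast h ih =>
    funext s
    have hR : fbar P μ f (h.castSucc).succ s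
        = ∑ a : A, μ h.succ s a * (f h.succ s a
            + ∑ s' : S ((h.succ).succ), P h.succ s a s' * fbar P μ f (h.succ).succ s') :=
      fbar_castSucc P μ f h.succ s
    rw [hR, fbar_castSucc]
    simp only [ih]

end Peel

lemma expTraj_init : ∀ (H : ℕ) (S : Fin (H+1) → Type u)
    [∀ i, Fintype (S i)] [∀ i, DecidableEq (S i)]
    (ρ : S 0 → ℝ)
    (P : ∀ h : Fin H, S h.castSucc → A → S h.succ → ℝ)
    (_hP : ∀ h s a, IsPMF (P h s a))
    (μ : ∀ h : Fin H, S h.castSucc → A → ℝ)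
    (_hμ : ∀ h s, IsPMF (μ h s))
    (g : S 0 → ℝ),
    expTraj ρ P μ (fun s _ => g (s 0)) = ∑ x, ρ x * g x := by
  intro H
  induction H with
  | zero =>
    intro S _ _ ρ P hP μ hμ g
    unfold expTraj trajDensity
    rw [sum_pi_succ S]
    simp only [sum_pi_empty, sum_fn_empty, Fin.cons_zero, Fin.prod_univ_zero, mul_one]
  | succ H IH =>
    intro S _ _ ρ P hP μ hμ g
    rw [expTraj_peel]
    simp only [Fin.cons_zero]
    have key : ∀ (x : S 0) (b : A),
        expTraj (S := fun i : Fin (H+1) => S i.succ) (P 0 x b)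
          (fun h => P h.succ) (fun h => μ h.succ) (fun _ _ => g x) = g x := by
      intro x b
      rw [IH (fun i : Fin (H+1) => S i.succ) (P 0 x b) (fun h => P h.succ)
        (fun h s a => hP h.succ s a) (fun h => μ h.succ) (fun h s => hμ h.succ s)
        (fun _ => g x)]
      rw [← Finset.sum_mul, (hP 0 x b).2, one_mul]
    simp only [key]
    refine Finset.sum_congr rfl fun x _ => ?_
    calc ∑ b : A, ρ x * μ 0 x b * g x
        = (∑ b : A, μ 0 x b) * (ρ x * g x) := by
          rw [Finset.sum_mul]; exact Finset.sum_congr rfl fun b _ => by ring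
      _ = ρ x * g x := by rw [(hμ 0 x).2, one_mul]

lemma expTraj_const {H : ℕ} {S : Fin (H+1) → Type u}
    [∀ i, Fintype (S i)] [∀ i, DecidableEq (S i)]
    (ρ : S 0 → ℝ) (hρ : IsPMF ρ)
    (P : ∀ h : Fin H, S h.castSucc → A → S h.succ → ℝ)
    (hP : ∀ h s a, IsPMF (P h s a))
    (μ : ∀ h : Fin H, S h.castSucc → A → ℝ)
    (hμ : ∀ h s, IsPMF (μ h s)) (c : ℝ) :
    expTraj ρ P μ (fun _ _ => c) = c := by
  rw [expTraj_init H S ρ P hP μ hμ (fun _ => c), ← Finset.sum_mul, hρ.2, one_mul]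

lemma expTraj_fsum : ∀ (H : ℕ) (S : Fin (H+1) → Type u)
    [∀ i, Fintype (S i)] [∀ i, DecidableEq (S i)]
    (ρ : S 0 → ℝ)
    (P : ∀ h : Fin H, S h.castSucc → A → S h.succ → ℝ)
    (_hP : ∀ h s a, IsPMF (P h s a))
    (μ : ∀ h : Fin H, S h.castSucc → A → ℝ)
    (_hμ : ∀ h s, IsPMF (μ h s))
    (f : ∀ h : Fin H, S h.castSucc → A → ℝ),
    expTraj ρ P μ (fun s a => ∑ h, f h (s h.castSucc) (a h))
      = ∑ x, ρ x * fbar P μ f 0 x := by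
  intro H
  induction H with
  | zero =>
    intro S _ _ ρ P hP μ hμ f
    have h0 : fbar P μ f 0 = fun _ => (0:ℝ) := fbar_last P μ f
    simp [expTraj, h0]
  | succ H IH =>
    intro S _ _ ρ P hP μ hμ f
    rw [expTraj_peel]
    simp only [Fin.sum_univ_succ, Fin.cons_zero, Fin.cons_succ, cons_succ_castSucc,
      Fin.castSucc_zero]
    have key : ∀ (x : S 0) (b : A),
        expTraj (S := fun i : Fin (H+1) => S i.succ) (P 0 x b)
          (fun h => P h.succ) (fun h => μ h.succ)
          (fun (s' : ∀ i : Fin (H+1), S i.succ) (a' : Fin H → A) =>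
            f 0 x b + ∑ j : Fin H, f j.succ (s' j.castSucc) (a' j))
        = f 0 x b + ∑ s1, P 0 x b s1 * fbar P μ f (0 : Fin (H+1)).succ s1 := by
      intro x b
      rw [expTraj_add]
      congr 1
      · exact expTraj_const (S := fun i : Fin (H+1) => S i.succ) (P 0 x b) (hP 0 x b)
          (fun h => P h.succ) (fun h s a => hP h.succ s a)
          (fun h => μ h.succ) (fun h s => hμ h.succ s) (f 0 x b)
      · refine (IH (fun i : Fin (H+1) => S i.succ) (P 0 x b) (fun h => P h.succ)
          (fun h s a => hP h.succ s a) (fun h => μ h.succ) (fun h s => hμ h.succ s)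
          (fun j => f j.succ)).trans ?_
        simp only [fbar_shift S P μ f]
    simp only [key]
    refine Finset.sum_congr rfl fun x _ => ?_
    have hW : fbar P μ f 0 x
        = ∑ b, μ 0 x b * (f 0 x b + ∑ s1, P 0 x b s1 * fbar P μ f (0 : Fin (H+1)).succ s1) :=
      fbar_castSucc P μ f 0 x
    rw [hW, Finset.mul_sum]
    exact Finset.sum_congr rfl fun b _ => by ring

lemma sum_eq_of_diff {ι : Type*} [Fintype ι] (F G φ : ι → ℝ) (k : ℝ)
    (h1 : ∀ b, G b = F b + k * φ b) (h2 : ∑ b, φ b = 0) :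
    ∑ b, F b = ∑ b, G b := by
  simp only [h1]
  rw [Finset.sum_add_distrib, ← Finset.mul_sum, h2, mul_zero, add_zero]

lemma main_sq : ∀ (H : ℕ) (S : Fin (H+1) → Type u)
    [∀ i, Fintype (S i)] [∀ i, DecidableEq (S i)]
    (ρ : S 0 → ℝ)
    (P : ∀ h : Fin H, S h.castSucc → A → S h.succ → ℝ)
    (_hP : ∀ h s a, IsPMF (P h s a))
    (μ : ∀ h : Fin H, S h.castSucc → A → ℝ)
    (_hμ : ∀ h s, IsPMF (μ h s))
    (f : ∀ h : Fin H, S h.castSucc → A → ℝ),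
    expTraj ρ P μ (fun s a => (∑ h : Fin H, f h (s h.castSucc) (a h)) ^ 2) =
      expTraj ρ P μ (fun s a =>
        (fbar P μ f 0 (s 0)) ^ 2 +
          ∑ h : Fin H,
            (f h (s h.castSucc) (a h) + fbar P μ f h.succ (s h.succ)
              - fbar P μ f h.castSucc (s h.castSucc)) ^ 2) := by
  intro H
  induction H with
  | zero =>
    intro S _ _ ρ P hP μ hμ f
    have h0 : fbar P μ f 0 = fun _ => (0:ℝ) := fbar_last P μ f
    simp [expTraj, h0]
  | succ H IH =>
    intro S _ _ ρ P hP μ hμ f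
    rw [expTraj_peel, expTraj_peel]
    refine Finset.sum_congr rfl fun x _ => ?_
    simp only [Fin.sum_univ_succ, Fin.cons_zero, Fin.cons_succ, cons_succ_castSucc,
      Fin.castSucc_zero]
    have hIH : ∀ b : A,
        expTraj (S := fun i : Fin (H+1) => S i.succ) (P 0 x b)
          (fun h => P h.succ) (fun h => μ h.succ)
          (fun (s' : ∀ i : Fin (H+1), S i.succ) (a' : Fin H → A) =>
            (∑ j : Fin H, f j.succ (s' j.castSucc) (a' j)) ^ 2)
        = (∑ s1, P 0 x b s1 * (fbar P μ f (0 : Fin (H+1)).succ s1) ^ 2)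
          + expTraj (S := fun i : Fin (H+1) => S i.succ) (P 0 x b)
              (fun h => P h.succ) (fun h => μ h.succ)
              (fun (s' : ∀ i : Fin (H+1), S i.succ) (a' : Fin H → A) =>
                ∑ j : Fin H,
                  (f j.succ (s' j.castSucc) (a' j) + fbar P μ f (j.succ).succ (s' j.succ)
                    - fbar P μ f (j.succ).castSucc (s' j.castSucc)) ^ 2) := by
      intro b
      refine (IH (fun i : Fin (H+1) => S i.succ) (P 0 x b) (fun h => P h.succ)
        (fun h s a => hP h.succ s a) (fun h => μ h.succ) (fun h s => hμ h.succ s)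
        (fun j => f j.succ)).trans ?_
      simp only [fbar_shift S P μ f, Fin.succ_castSucc]
      simp only [expTraj_add]
      congr 1
      exact expTraj_init H (fun i : Fin (H+1) => S i.succ) (P 0 x b) (fun h => P h.succ)
        (fun h s a => hP h.succ s a) (fun h => μ h.succ) (fun h s => hμ h.succ s)
        (fun s1 => (fbar P μ f (0 : Fin (H+1)).succ s1) ^ 2)
    have hT : ∀ b : A,
        expTraj (S := fun i : Fin (H+1) => S i.succ) (P 0 x b)
          (fun h => P h.succ) (fun h => μ h.succ)
          (fun (s' : ∀ i : Fin (H+1), S i.succ) (a' : Fin H → A) =>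
            ∑ j : Fin H, f j.succ (s' j.castSucc) (a' j))
        = ∑ s1, P 0 x b s1 * fbar P μ f (0 : Fin (H+1)).succ s1 := by
      intro b
      refine (expTraj_fsum H (fun i : Fin (H+1) => S i.succ) (P 0 x b) (fun h => P h.succ)
        (fun h s a => hP h.succ s a) (fun h => μ h.succ) (fun h s => hμ h.succ s)
        (fun j => f j.succ)).trans ?_
      simp only [fbar_shift S P μ f]
    have hconst : ∀ (b : A) (c : ℝ),
        expTraj (S := fun i : Fin (H+1) => S i.succ) (P 0 x b)
          (fun h => P h.succ) (fun h => μ h.succ) (fun _ _ => c) = c :=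
      fun b c => expTraj_const (S := fun i : Fin (H+1) => S i.succ) (P 0 x b) (hP 0 x b)
        (fun h => P h.succ) (fun h s a => hP h.succ s a)
        (fun h => μ h.succ) (fun h s => hμ h.succ s) c
    have hinit : ∀ b : A,
        expTraj (S := fun i : Fin (H+1) => S i.succ) (P 0 x b)
          (fun h => P h.succ) (fun h => μ h.succ)
          (fun (s' : ∀ i : Fin (H+1), S i.succ) (_ : Fin H → A) =>
            (f 0 x b + fbar P μ f (0 : Fin (H+1)).succ (s' 0) - fbar P μ f 0 x) ^ 2)
        = ∑ s1, P 0 x b s1 *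
            (f 0 x b + fbar P μ f (0 : Fin (H+1)).succ s1 - fbar P μ f 0 x) ^ 2 :=
      fun b => expTraj_init H (fun i : Fin (H+1) => S i.succ) (P 0 x b) (fun h => P h.succ)
        (fun h s a => hP h.succ s a) (fun h => μ h.succ) (fun h s => hμ h.succ s)
        (fun s1 => (f 0 x b + fbar P μ f (0 : Fin (H+1)).succ s1 - fbar P μ f 0 x) ^ 2)
    simp only [add_sq]
    simp only [expTraj_add, expTraj_mul]
    simp only [hIH]
    simp only [hT]
    simp only [hconst]
    simp only [hinit]
    have hQ : ∀ b : A,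
        (∑ s1, P 0 x b s1 *
            (f 0 x b + fbar P μ f (0 : Fin (H+1)).succ s1 - fbar P μ f 0 x) ^ 2)
        = (∑ s1, P 0 x b s1 * (fbar P μ f (0 : Fin (H+1)).succ s1) ^ 2)
          + (2 * f 0 x b - 2 * fbar P μ f 0 x) *
              (∑ s1, P 0 x b s1 * fbar P μ f (0 : Fin (H+1)).succ s1)
          + (f 0 x b - fbar P μ f 0 x) ^ 2 := by
      intro b
      have e : ∀ s1, P 0 x b s1 *
            (f 0 x b + fbar P μ f (0 : Fin (H+1)).succ s1 - fbar P μ f 0 x) ^ 2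
          = P 0 x b s1 * (fbar P μ f (0 : Fin (H+1)).succ s1) ^ 2
            + (2 * f 0 x b - 2 * fbar P μ f 0 x) *
                (P 0 x b s1 * fbar P μ f (0 : Fin (H+1)).succ s1)
            + (f 0 x b - fbar P μ f 0 x) ^ 2 * P 0 x b s1 := fun s1 => by ring
      rw [Finset.sum_congr rfl fun s1 _ => e s1, Finset.sum_add_distrib,
        Finset.sum_add_distrib, ← Finset.mul_sum, ← Finset.mul_sum, (hP 0 x b).2, mul_one]
    have hW : (∑ b, μ 0 x b *
          (f 0 x b + ∑ s1, P 0 x b s1 * fbar P μ f (0 : Fin (H+1)).succ s1))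
        = fbar P μ f 0 x := (fbar_castSucc P μ f 0 x).symm
    have hμ1 : (∑ b, μ 0 x b) = 1 := (hμ 0 x).2
    simp only [hQ]
    refine sum_eq_of_diff _ _
      (fun b => fbar P μ f 0 x * μ 0 x b
        - μ 0 x b * (f 0 x b + ∑ s1, P 0 x b s1 * fbar P μ f (0 : Fin (H+1)).succ s1))
      (2 * fbar P μ f 0 x * ρ x) ?_ ?_
    · intro b
      ring
    · rw [Finset.sum_sub_distrib, ← Finset.mul_sum, hμ1, hW]
      ring

/-- **Second-moment trajectory decomposition.** For any policy `μ` and any step functions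
`f_h`, with `f̄` defined by the backward recursion, one has
`E_μ[(Σ_h f_h(s_h,a_h))²] = E_μ[ f̄_1(s_1)² + Σ_h (f_h(s_h,a_h) + f̄_{h+1}(s_{h+1}) − f̄_h(s_h))² ]`. -/
theorem second_moment_decomposition
    (hH : 0 < H) [∀ i, Nonempty (S i)] [Nonempty A]
    (ρ : S 0 → ℝ) (hρ : IsPMF ρ)
    (P : ∀ h : Fin H, S h.castSucc → A → S h.succ → ℝ)
    (hP : ∀ h s a, IsPMF (P h s a))
    (μ : ∀ h : Fin H, S h.castSucc → A → ℝ)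
    (hμ : ∀ h s, IsPMF (μ h s))
    (f : ∀ h : Fin H, S h.castSucc → A → ℝ) :
    expTraj ρ P μ (fun s a => (∑ h : Fin H, f h (s h.castSucc) (a h)) ^ 2) =
      expTraj ρ P μ (fun s a =>
        (fbar P μ f 0 (s 0)) ^ 2 +
          ∑ h : Fin H,
            (f h (s h.castSucc) (a h) + fbar P μ f h.succ (s h.succ)
              - fbar P μ f h.castSucc (s h.castSucc)) ^ 2) :=
  main_sq H S ρ P hP μ hμ f

end TBRM
end

section
/- Suboptimality bound for softmax policies via expected Bellman errors: Let Q = (Q_h)_{h=1}^H with Q_h : S_h × A → ℝ and let π̂ := π_Q be its softmax policy. Then for every policy π† (in particular for any maximizer π* of J_β over policies), J_β(π†) − J_β(π̂) ≤ 2β · max over π ∈ {π†, π̂} of | E_π[ Σ_{h=1}^H ( Q_h(s_h,a_h) − (T_β Q)_h(s_h,a_h) ) ] |. -/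
/-!
With `V = V_Q` and `log π_Q = Q - V`, the shifted reward is `R = T_β Q - P V`, so for any
policy `π` the regularized reward of step `h` is
`β ((V_h(s_h) - (P_h V_{h+1})(s_h, a_h)) - log (π/π_Q)(a_h|s_h) - (Q - T_β Q)_h(s_h, a_h))`.
By the Markov property the first terms telescope in expectation to `E[V_1(s_1)]`, which does not
depend on `π`; the second has expectation `-KL(π ‖ π_Q) ≤ 0` (Gibbs), with equality at `π = π_Q`.
Hence `J_β(π†) - J_β(π_Q) ≤ β (E_{π_Q}[Σ (Q - T_β Q)] - E_{π†}[Σ (Q - T_β Q)])`.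
-/

open Finset

namespace TBRM

variable {H : ℕ} {S : Fin (H + 1) → Type*} {A : Type*}
variable [∀ i, Fintype (S i)] [∀ i, DecidableEq (S i)] [Fintype A] [DecidableEq A]

/-- KL-regularized return `J_β(π)` relative to a reference policy `πref`. -/
noncomputable def KLret (ρ : S 0 → ℝ)
    (P : ∀ h : Fin H, S h.castSucc → A → S h.succ → ℝ)
    (πref : ∀ h : Fin H, S h.castSucc → A → ℝ)
    (r : ∀ h : Fin H, S h.castSucc → A → ℝ) (β : ℝ)
    (π : ∀ h : Fin H, S h.castSucc → A → ℝ) : ℝ :=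
  expTraj ρ P π (fun s a => ∑ h : Fin H,
    (r h (s h.castSucc) (a h)
      - β * Real.log (π h (s h.castSucc) (a h) / πref h (s h.castSucc) (a h))))

/-- Shifted reward `R_h(s,a) := r_h(s,a)/β + log πref_h(a|s)`. -/
noncomputable def shiftedR (πref : ∀ h : Fin H, S h.castSucc → A → ℝ)
    (r : ∀ h : Fin H, S h.castSucc → A → ℝ) (β : ℝ)
    (h : Fin H) (s : S h.castSucc) (a : A) : ℝ :=
  r h s a / β + Real.log (πref h s a)

/-- The soft value function of `Q`: `V_{Q,h}(s) = log Σ_a exp(Q_h(s,a))` on layers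
`1, …, H`, and `V_{Q,H+1} ≡ 0` on the last layer. -/
noncomputable def VQ (Q : ∀ h : Fin H, S h.castSucc → A → ℝ) :
    ∀ i : Fin (H + 1), S i → ℝ :=
  Fin.lastCases (fun _ => 0)
    (fun h s => Real.log (∑ a : A, Real.exp (Q h s a)))

/-- The softmax policy of `Q`: `π_{Q,h}(a|s) := exp(Q_h(s,a) − V_{Q,h}(s))`. -/
noncomputable def softmaxPolicy (Q : ∀ h : Fin H, S h.castSucc → A → ℝ)
    (h : Fin H) (s : S h.castSucc) (a : A) : ℝ :=
  Real.exp (Q h s a - VQ Q h.castSucc s)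

/-- The soft Bellman optimality operator
`(T_β Q)_h(s,a) := R_h(s,a) + E_{s'∼P_h(s,a)}[V_{Q,h+1}(s')]`. -/
noncomputable def Topt (P : ∀ h : Fin H, S h.castSucc → A → S h.succ → ℝ)
    (πref : ∀ h : Fin H, S h.castSucc → A → ℝ)
    (r : ∀ h : Fin H, S h.castSucc → A → ℝ) (β : ℝ)
    (Q : ∀ h : Fin H, S h.castSucc → A → ℝ)
    (h : Fin H) (s : S h.castSucc) (b : A) : ℝ :=
  shiftedR πref r β h s b + ∑ s' : S h.succ, P h s b s' * VQ Q h.succ s'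

end TBRM

namespace TBRM

open Function

section PiSum

variable {ι : Type*} [Fintype ι] [DecidableEq ι] {T : ι → Type*} [∀ i, Fintype (T i)]

theorem sum_sum_update {M : Type*} [AddCommMonoid M] (j : ι) (F : (∀ i, T i) → M) :
    ∑ s, ∑ y : T j, F (update s j y) = Fintype.card (T j) • ∑ s, F s := by
  let e : (∀ i, T i) × T j ≃ (∀ i, T i) × T j :=
    { toFun p := (update p.1 j p.2, p.1 j)
      invFun p := (update p.1 j p.2, p.1 j)
      left_inv p := by simp
      right_inv p := by simp }
  calc ∑ s, ∑ y : T j, F (update s j y) = ∑ p, F (e p).1 := (Fintype.sum_prod_type' _).symm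
    _ = ∑ p : (∀ i, T i) × T j, F p.1 := e.sum_comp fun p => F p.1
    _ = Fintype.card (T j) • ∑ s, F s := by
      rw [Fintype.sum_prod_type]
      simp [smul_sum]

theorem sum_sum_eq_of_sum_sum_update_eq {κ : Type*} [Fintype κ] [DecidableEq κ] {U : κ → Type*}
    [∀ k, Fintype (U k)] {M : Type*} [AddCommMonoid M] [IsAddTorsionFree M]
    (j : ι) (k : κ) [Nonempty (T j)] [Nonempty (U k)] {F G : (∀ i, T i) → (∀ k, U k) → M}
    (h : ∀ s a, ∑ y : T j, ∑ b : U k, F (update s j y) (update a k b) =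
      ∑ y : T j, ∑ b : U k, G (update s j y) (update a k b)) :
    ∑ s, ∑ a, F s a = ∑ s, ∑ a, G s a := by
  have key : ∀ F : (∀ i, T i) → (∀ k, U k) → M,
      ∑ s, ∑ a, ∑ y : T j, ∑ b : U k, F (update s j y) (update a k b) =
        (Fintype.card (T j) * Fintype.card (U k)) • ∑ s, ∑ a, F s a := by
    intro F
    calc ∑ s, ∑ a, ∑ y : T j, ∑ b : U k, F (update s j y) (update a k b)
        = ∑ s, ∑ y : T j, ∑ a, ∑ b : U k, F (update s j y) (update a k b) :=
          sum_congr rfl fun s _ => sum_comm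
      _ = Fintype.card (U k) • ∑ s, ∑ y : T j, ∑ a, F (update s j y) a := by
          simp only [sum_sum_update, smul_sum]
      _ = (Fintype.card (T j) * Fintype.card (U k)) • ∑ s, ∑ a, F s a := by
          rw [sum_sum_update j fun s => ∑ a, F s a, smul_smul, mul_comm]
  apply nsmul_right_injective
    (mul_ne_zero (Fintype.card_ne_zero (α := T j)) (Fintype.card_ne_zero (α := U k)))
  dsimp only
  rw [← key F, ← key G]
  exact sum_congr rfl fun s _ => sum_congr rfl fun a _ => h s a

end PiSum

theorem Fin.sum_castSucc_sub_succ {M : Type*} [AddCommGroup M] :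
    ∀ {n : ℕ} (f : Fin (n + 1) → M), ∑ i : Fin n, (f i.castSucc - f i.succ) = f 0 - f (Fin.last n)
  | 0, f => by simp
  | n + 1, f => by
    rw [Fin.sum_univ_castSucc]
    simp only [Fin.succ_castSucc]
    rw [Fin.sum_castSucc_sub_succ (fun i => f i.castSucc)]
    simp

theorem sum_mul_log_sub_log_nonneg {X : Type*} [Fintype X] {p q : X → ℝ} (hp : IsPMF p)
    (hq : ∀ x, 0 < q x) (hq1 : ∑ x, q x ≤ 1) :
    0 ≤ ∑ x, p x * (Real.log (p x) - Real.log (q x)) := by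
  have key : ∀ x, p x - q x ≤ p x * (Real.log (p x) - Real.log (q x)) := by
    intro x
    rcases (hp.1 x).eq_or_lt with hp0 | hp0
    · simp [← hp0, (hq x).le]
    have hlog := Real.log_le_sub_one_of_pos (div_pos (hq x) hp0)
    rw [Real.log_div (hq x).ne' hp0.ne'] at hlog
    have hmul := mul_le_mul_of_nonneg_left hlog hp0.le
    rw [mul_sub, mul_sub, mul_div_cancel₀ _ hp0.ne'] at hmul
    linarith
  calc (0 : ℝ) ≤ ∑ x, p x - ∑ x, q x := by rw [hp.2]; linarith
    _ = ∑ x, (p x - q x) := (sum_sub_distrib ..).symm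
    _ ≤ _ := sum_le_sum fun x _ => key x

section Trajectory

variable {H : ℕ} {S : Fin (H + 1) → Type*} {A : Type*}
  (ρ : S 0 → ℝ) (P : ∀ h : Fin H, S h.castSucc → A → S h.succ → ℝ)
  (π : ∀ h : Fin H, S h.castSucc → A → ℝ)

theorem trajDensity_nonneg (hρ : ∀ x, 0 ≤ ρ x) (hP : ∀ h x b y, 0 ≤ P h x b y)
    (hπ : ∀ h x b, 0 ≤ π h x b) (s : ∀ i, S i) (a : Fin H → A) :
    0 ≤ trajDensity ρ P π s a :=
  mul_nonneg (hρ _) (prod_nonneg fun _ _ => mul_nonneg (hπ _ _ _) (hP _ _ _ _))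

variable [∀ i, Fintype (S i)] [Fintype A]

theorem expTraj_sub (f g : (∀ i, S i) → (Fin H → A) → ℝ) :
    expTraj ρ P π (fun s a => f s a - g s a) = expTraj ρ P π f - expTraj ρ P π g := by
  simp only [expTraj, mul_sub, sum_sub_distrib]

theorem expTraj_const_mul (c : ℝ) (f : (∀ i, S i) → (Fin H → A) → ℝ) :
    expTraj ρ P π (fun s a => c * f s a) = c * expTraj ρ P π f := by
  simp only [expTraj, mul_sum, mul_left_comm]

theorem expTraj_sum {ι : Type*} (t : Finset ι) (f : ι → (∀ i, S i) → (Fin H → A) → ℝ) :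
    expTraj ρ P π (fun s a => ∑ i ∈ t, f i s a) = ∑ i ∈ t, expTraj ρ P π (f i) := by
  simp only [expTraj, mul_sum]
  exact (sum_congr rfl fun _ _ => sum_comm).trans sum_comm

theorem expTraj_zero : expTraj ρ P π (fun _ _ => (0 : ℝ)) = 0 := by
  simp [expTraj]

theorem expTraj_congr_of_policy_ne_zero {f g : (∀ i, S i) → (Fin H → A) → ℝ}
    (hfg : ∀ s a, (∀ h, π h (s h.castSucc) (a h) ≠ 0) → f s a = g s a) :
    expTraj ρ P π f = expTraj ρ P π g := by
  refine sum_congr rfl fun s _ => sum_congr rfl fun a _ => ?_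
  by_cases hd : trajDensity ρ P π s a = 0
  · simp [hd]
  refine congrArg _ (hfg s a fun h => ?_)
  have hprod := (prod_ne_zero_iff.1 (right_ne_zero_of_mul hd)) h (mem_univ h)
  exact left_ne_zero_of_mul hprod

theorem expTraj_mono (hρ : ∀ x, 0 ≤ ρ x) (hP : ∀ h x b y, 0 ≤ P h x b y)
    (hπ : ∀ h x b, 0 ≤ π h x b) {f g : (∀ i, S i) → (Fin H → A) → ℝ}
    (hfg : ∀ s a, f s a ≤ g s a) :
    expTraj ρ P π f ≤ expTraj ρ P π g :=
  sum_le_sum fun s _ => sum_le_sum fun a _ =>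
    mul_le_mul_of_nonneg_left (hfg s a) (trajDensity_nonneg ρ P π hρ hP hπ s a)

end Trajectory

section Marginalization

variable {H : ℕ} {S : Fin (H + 1) → Type*} {A : Type*}

def DependsOnlyOnPrefix (k : ℕ) (f : (∀ i, S i) → (Fin H → A) → ℝ) : Prop :=
  ∀ t : Fin H, k ≤ t.val → ∀ s a y b, f (update s t.succ y) (update a t b) = f s a

theorem DependsOnlyOnPrefix.mono {k l : ℕ} {f : (∀ i, S i) → (Fin H → A) → ℝ}
    (hf : DependsOnlyOnPrefix k f) (hkl : k ≤ l) : DependsOnlyOnPrefix l f :=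
  fun t ht => hf t (hkl.trans ht)

theorem dependsOnlyOnPrefix_state (i : Fin (H + 1)) (g : S i → ℝ) :
    DependsOnlyOnPrefix (A := A) i (fun s _ => g (s i)) := by
  intro t ht s a y b
  dsimp only
  rw [update_of_ne (Fin.ne_of_val_ne (by simp; omega))]

theorem dependsOnlyOnPrefix_step (h : Fin H) (F : S h.castSucc → A → S h.succ → ℝ) :
    DependsOnlyOnPrefix (h + 1) (fun s a => F (s h.castSucc) (a h) (s h.succ)) := by
  intro t ht s a y b
  dsimp only
  have h₁ : h.castSucc ≠ t.succ := Fin.ne_of_val_ne (by simp; omega)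
  have h₂ : h.succ ≠ t.succ := Fin.ne_of_val_ne (by simp; omega)
  have h₃ : h ≠ t := Fin.ne_of_val_ne (by omega)
  rw [update_of_ne h₁, update_of_ne h₂, update_of_ne h₃]

variable [∀ i, Fintype (S i)] [Fintype A]
  (ρ : S 0 → ℝ) (P : ∀ h : Fin H, S h.castSucc → A → S h.succ → ℝ)
  (π : ∀ h : Fin H, S h.castSucc → A → ℝ)

noncomputable def stepWeight (m : ℕ) (h : Fin H) (s : ∀ i, S i) (a : Fin H → A) : ℝ :=
  if h.val < m then π h (s h.castSucc) (a h) * P h (s h.castSucc) (a h) (s h.succ)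
  else ((Fintype.card A : ℝ) * Fintype.card (S h.succ))⁻¹

/-- The trajectory density with the steps from `m` on replaced by uniform draws of the action
and the next state. Unlike truncating the product, this stays a density on the full trajectory
space, so that the steps can be summed out one at a time from the end. -/
noncomputable def truncDensity (m : ℕ) (s : ∀ i, S i) (a : Fin H → A) : ℝ :=
  ρ (s 0) * ∏ h, stepWeight P π m h s a

theorem truncDensity_horizon : truncDensity ρ P π H = trajDensity ρ P π := by
  ext s a
  simp [truncDensity, trajDensity, stepWeight]

theorem stepWeight_update_of_ne {t h : Fin H} (hht : h ≠ t) {m : ℕ} (htm : t.val ≤ m)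
    (hmt : m ≤ t.val + 1) (s : ∀ i, S i) (a : Fin H → A) (y : S t.succ) (b : A) :
    stepWeight P π m h (update s t.succ y) (update a t b) = stepWeight P π t h s a := by
  have hv : h.val ≠ t.val := Fin.val_ne_of_ne hht
  unfold stepWeight
  by_cases hlt : h.val < t.val
  · rw [if_pos (by omega), if_pos hlt, update_of_ne hht,
      update_of_ne (Fin.ne_of_val_ne (by simp; omega)),
      update_of_ne (Fin.ne_of_val_ne (by simp; omega))]
  · rw [if_neg (by omega), if_neg hlt]

theorem truncDensity_update {t : Fin H} {m : ℕ} (htm : t.val ≤ m) (hmt : m ≤ t.val + 1)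
    (s : ∀ i, S i) (a : Fin H → A) (y : S t.succ) (b : A) :
    truncDensity ρ P π m (update s t.succ y) (update a t b) =
      (ρ (s 0) * ∏ h ∈ univ.erase t, stepWeight P π t h s a) *
        stepWeight P π m t (update s t.succ y) (update a t b) := by
  rw [truncDensity, ← mul_prod_erase _ _ (mem_univ t), update_of_ne (Fin.succ_ne_zero t).symm,
    prod_congr rfl fun h hh => stepWeight_update_of_ne P π (ne_of_mem_erase hh) htm hmt s a y b]
  ring

theorem stepWeight_succ_update (t : Fin H) (s : ∀ i, S i) (a : Fin H → A) (y : S t.succ)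
    (b : A) :
    stepWeight P π (t + 1) t (update s t.succ y) (update a t b) =
      π t (s t.castSucc) b * P t (s t.castSucc) b y := by
  have ht : t.castSucc ≠ t.succ := Fin.castSucc_lt_succ.ne
  simp [stepWeight, update_of_ne ht]

theorem sum_update_truncDensity_succ_mul (t : Fin H) (s : ∀ i, S i) (a : Fin H → A)
    (g : S t.succ → A → ℝ) :
    ∑ y, ∑ b, truncDensity ρ P π (t + 1) (update s t.succ y) (update a t b) * g y b =
      (ρ (s 0) * ∏ h ∈ univ.erase t, stepWeight P π t h s a) *
        ∑ b, π t (s t.castSucc) b * ∑ y, P t (s t.castSucc) b y * g y b := by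
  simp only [truncDensity_update ρ P π (Nat.le_succ _) le_rfl, stepWeight_succ_update, mul_sum]
  rw [sum_comm]
  exact sum_congr rfl fun b _ => sum_congr rfl fun y _ => by ring

variable [∀ i, Nonempty (S i)] [Nonempty A]

theorem sum_update_truncDensity_self_mul (t : Fin H) (s : ∀ i, S i) (a : Fin H → A) (c : ℝ) :
    ∑ y, ∑ b, truncDensity ρ P π t (update s t.succ y) (update a t b) * c =
      (ρ (s 0) * ∏ h ∈ univ.erase t, stepWeight P π t h s a) * c := by
  simp only [truncDensity_update ρ P π le_rfl (Nat.le_succ _), stepWeight, lt_irrefl, if_false,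
    ← sum_mul, sum_const, card_univ, nsmul_eq_mul]
  field_simp

variable {P π}

theorem sum_truncDensity_succ_mul (hP : ∀ h x b, ∑ y, P h x b y = 1)
    (hπ : ∀ h x, ∑ b, π h x b = 1) (t : Fin H) {f : (∀ i, S i) → (Fin H → A) → ℝ}
    (hf : DependsOnlyOnPrefix t f) :
    ∑ s, ∑ a, truncDensity ρ P π (t + 1) s a * f s a =
      ∑ s, ∑ a, truncDensity ρ P π t s a * f s a := by
  refine sum_sum_eq_of_sum_sum_update_eq t.succ t fun s a => ?_
  simp only [hf t le_rfl]
  rw [sum_update_truncDensity_succ_mul ρ P π t s a fun _ _ => f s a,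
    sum_update_truncDensity_self_mul]
  simp only [← sum_mul, hP, one_mul, hπ]

theorem expTraj_eq_sum_truncDensity (hP : ∀ h x b, ∑ y, P h x b y = 1)
    (hπ : ∀ h x, ∑ b, π h x b = 1) {k : ℕ} (hk : k ≤ H) {f : (∀ i, S i) → (Fin H → A) → ℝ}
    (hf : DependsOnlyOnPrefix k f) :
    expTraj ρ P π f = ∑ s, ∑ a, truncDensity ρ P π k s a * f s a := by
  induction hk using Nat.decreasingInduction with
  | self => simp [expTraj, truncDensity_horizon]
  | of_succ k hk ih =>
    rw [ih (hf.mono k.le_succ)]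
    exact sum_truncDensity_succ_mul ρ hP hπ ⟨k, hk⟩ hf

theorem expTraj_step (hP : ∀ h x b, ∑ y, P h x b y = 1) (hπ : ∀ h x, ∑ b, π h x b = 1)
    (h : Fin H) (F : S h.castSucc → A → S h.succ → ℝ) :
    expTraj ρ P π (fun s a => F (s h.castSucc) (a h) (s h.succ)) =
      expTraj ρ P π (fun s _ =>
        ∑ b, π h (s h.castSucc) b * ∑ y, P h (s h.castSucc) b y * F (s h.castSucc) b y) := by
  rw [expTraj_eq_sum_truncDensity ρ hP hπ h.isLt (dependsOnlyOnPrefix_step h F),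
    expTraj_eq_sum_truncDensity ρ hP hπ h.isLt.le (dependsOnlyOnPrefix_state h.castSucc
      fun x => ∑ b, π h x b * ∑ y, P h x b y * F x b y)]
  refine sum_sum_eq_of_sum_sum_update_eq h.succ h fun s a => ?_
  have hs (y : S h.succ) : update s h.succ y h.castSucc = s h.castSucc :=
    update_of_ne Fin.castSucc_lt_succ.ne ..
  simp only [hs, update_self]
  rw [sum_update_truncDensity_succ_mul ρ P π h s a fun y b => F (s h.castSucc) b y,
    sum_update_truncDensity_self_mul]

theorem expTraj_initial_eq {π' : ∀ h : Fin H, S h.castSucc → A → ℝ}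
    (hP : ∀ h x b, ∑ y, P h x b y = 1) (hπ : ∀ h x, ∑ b, π h x b = 1)
    (hπ' : ∀ h x, ∑ b, π' h x b = 1) (g : S 0 → ℝ) :
    expTraj ρ P π (fun s _ => g (s 0)) = expTraj ρ P π' (fun s _ => g (s 0)) := by
  rw [expTraj_eq_sum_truncDensity ρ hP hπ H.zero_le (dependsOnlyOnPrefix_state 0 g),
    expTraj_eq_sum_truncDensity ρ hP hπ' H.zero_le (dependsOnlyOnPrefix_state 0 g)]
  simp [truncDensity, stepWeight]

end Marginalization

section SoftMDP

variable {H : ℕ} {S : Fin (H + 1) → Type*} {A : Type*} [Fintype A]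

theorem VQ_castSucc (Q : ∀ h : Fin H, S h.castSucc → A → ℝ) (h : Fin H) (x : S h.castSucc) :
    VQ Q h.castSucc x = Real.log (∑ b, Real.exp (Q h x b)) := by
  simp [VQ]

theorem VQ_last (Q : ∀ h : Fin H, S h.castSucc → A → ℝ) (x : S (Fin.last H)) :
    VQ Q (Fin.last H) x = 0 := by
  simp [VQ]

theorem log_softmaxPolicy (Q : ∀ h : Fin H, S h.castSucc → A → ℝ) (h : Fin H)
    (x : S h.castSucc) (b : A) :
    Real.log (softmaxPolicy Q h x b) = Q h x b - VQ Q h.castSucc x :=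
  Real.log_exp _

theorem softmaxPolicy_pos (Q : ∀ h : Fin H, S h.castSucc → A → ℝ) (h : Fin H)
    (x : S h.castSucc) (b : A) : 0 < softmaxPolicy Q h x b :=
  Real.exp_pos _

theorem sum_softmaxPolicy [Nonempty A] (Q : ∀ h : Fin H, S h.castSucc → A → ℝ) (h : Fin H)
    (x : S h.castSucc) : ∑ b, softmaxPolicy Q h x b = 1 := by
  have hpos : 0 < ∑ b, Real.exp (Q h x b) := sum_pos (fun b _ => Real.exp_pos _) univ_nonempty
  simp only [softmaxPolicy, Real.exp_sub, VQ_castSucc, Real.exp_log hpos, ← sum_div]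
  exact div_self hpos.ne'

variable [∀ i, Fintype (S i)] [∀ i, Nonempty (S i)] [Nonempty A]
  (ρ : S 0 → ℝ) {P : ∀ h : Fin H, S h.castSucc → A → S h.succ → ℝ}
  {π : ∀ h : Fin H, S h.castSucc → A → ℝ}

theorem expTraj_sum_sub_expected_next (hP : ∀ h x b, ∑ y, P h x b y = 1)
    (hπ : ∀ h x, ∑ b, π h x b = 1) (W : ∀ i, S i → ℝ) :
    expTraj ρ P π (fun s a => ∑ h : Fin H,
        (W h.castSucc (s h.castSucc) - ∑ y, P h (s h.castSucc) (a h) y * W h.succ y)) =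
      expTraj ρ P π (fun s _ => W 0 (s 0) - W (Fin.last H) (s (Fin.last H))) := by
  have htel (s : ∀ i, S i) : W 0 (s 0) - W (Fin.last H) (s (Fin.last H)) =
      ∑ h : Fin H, (W h.castSucc (s h.castSucc) - W h.succ (s h.succ)) :=
    (Fin.sum_castSucc_sub_succ fun i => W i (s i)).symm
  simp only [htel]
  rw [expTraj_sum, expTraj_sum]
  refine sum_congr rfl fun h _ => ?_
  refine (expTraj_step ρ hP hπ h fun x b _ => W h.castSucc x - ∑ y, P h x b y * W h.succ y).trans
    (Eq.trans ?_ (expTraj_step ρ hP hπ h fun x _ y => W h.castSucc x - W h.succ y).symm)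
  simp only [mul_sub, sum_sub_distrib, ← sum_mul, hP, one_mul]

theorem expTraj_sum_log_sub_log_nonneg (hρ : ∀ x, 0 ≤ ρ x) (hP : ∀ h x b, IsPMF (P h x b))
    (hπ : ∀ h x, IsPMF (π h x)) {q : ∀ h : Fin H, S h.castSucc → A → ℝ}
    (hq : ∀ h x b, 0 < q h x b) (hq1 : ∀ h x, ∑ b, q h x b ≤ 1) :
    0 ≤ expTraj ρ P π (fun s a => ∑ h : Fin H,
      (Real.log (π h (s h.castSucc) (a h)) - Real.log (q h (s h.castSucc) (a h)))) := by
  rw [expTraj_sum]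
  refine sum_nonneg fun h _ => ?_
  rw [← expTraj_zero ρ P π]
  refine (expTraj_mono ρ P π hρ (fun h x b => (hP h x b).1) (fun h x => (hπ h x).1)
    fun s _ => ?_).trans (expTraj_step ρ (fun h x b => (hP h x b).2) (fun h x => (hπ h x).2) h
      fun x b _ => Real.log (π h x b) - Real.log (q h x b)).symm.le
  simp only [← sum_mul, (hP _ _ _).2, one_mul]
  exact sum_mul_log_sub_log_nonneg (hπ h _) (hq h _) (hq1 h _)

theorem KLret_eq (hP : ∀ h x b, ∑ y, P h x b y = 1) (hπ : ∀ h x, ∑ b, π h x b = 1)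
    {πref : ∀ h : Fin H, S h.castSucc → A → ℝ} (hπref : ∀ h x b, 0 < πref h x b)
    (r : ∀ h : Fin H, S h.castSucc → A → ℝ) {β : ℝ} (hβ : β ≠ 0)
    (Q : ∀ h : Fin H, S h.castSucc → A → ℝ) :
    KLret ρ P πref r β π = β * (expTraj ρ P π (fun s _ => VQ Q 0 (s 0))
      - expTraj ρ P π (fun s a => ∑ h : Fin H, (Real.log (π h (s h.castSucc) (a h))
          - Real.log (softmaxPolicy Q h (s h.castSucc) (a h))))
      - expTraj ρ P π (fun s a => ∑ h : Fin H,
          (Q h (s h.castSucc) (a h) - Topt P πref r β Q h (s h.castSucc) (a h)))) := by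
  have step (h : Fin H) (x : S h.castSucc) (b : A) (hb : π h x b ≠ 0) :
      r h x b - β * Real.log (π h x b / πref h x b) =
        β * ((VQ Q h.castSucc x - ∑ y, P h x b y * VQ Q h.succ y)
          - (Real.log (π h x b) - Real.log (softmaxPolicy Q h x b))
          - (Q h x b - Topt P πref r β Q h x b)) := by
    rw [Real.log_div hb (hπref h x b).ne', log_softmaxPolicy, Topt, shiftedR]
    field_simp
    ring
  calc KLret ρ P πref r β π
      = expTraj ρ P π (fun s a => β * (∑ h : Fin H, (VQ Q h.castSucc (s h.castSucc)
            - ∑ y, P h (s h.castSucc) (a h) y * VQ Q h.succ y)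
          - ∑ h : Fin H, (Real.log (π h (s h.castSucc) (a h))
            - Real.log (softmaxPolicy Q h (s h.castSucc) (a h)))
          - ∑ h : Fin H,
            (Q h (s h.castSucc) (a h) - Topt P πref r β Q h (s h.castSucc) (a h)))) := by
        refine expTraj_congr_of_policy_ne_zero ρ P π fun s a hs => ?_
        rw [← sum_sub_distrib, ← sum_sub_distrib, mul_sum]
        exact sum_congr rfl fun h _ => step h _ _ (hs h)
    _ = _ := by
        rw [expTraj_const_mul, expTraj_sub, expTraj_sub, expTraj_sum_sub_expected_next ρ hP hπ]
        simp only [VQ_last, sub_zero]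

end SoftMDP

variable {H : ℕ} {S : Fin (H + 1) → Type*} {A : Type*}
variable [∀ i, Fintype (S i)] [∀ i, DecidableEq (S i)] [Fintype A] [DecidableEq A]

theorem suboptimality_of_softmax_general
    [∀ i, Nonempty (S i)] [Nonempty A]
    (ρ : S 0 → ℝ) (hρ : IsPMF ρ)
    (P : ∀ h : Fin H, S h.castSucc → A → S h.succ → ℝ)
    (hP : ∀ h s a, IsPMF (P h s a))
    (r : ∀ h : Fin H, S h.castSucc → A → ℝ)
    (πref : ∀ h : Fin H, S h.castSucc → A → ℝ)
    (hπrefpos : ∀ h s a, 0 < πref h s a)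
    (β : ℝ) (hβ : 0 < β)
    (Q : ∀ h : Fin H, S h.castSucc → A → ℝ)
    (πdag : ∀ h : Fin H, S h.castSucc → A → ℝ)
    (hπdag : ∀ h s, IsPMF (πdag h s)) :
    KLret ρ P πref r β πdag - KLret ρ P πref r β (softmaxPolicy Q) ≤
      2 * β * max
        |expTraj ρ P πdag (fun s a => ∑ h : Fin H,
            (Q h (s h.castSucc) (a h) - Topt P πref r β Q h (s h.castSucc) (a h)))|
        |expTraj ρ P (softmaxPolicy Q) (fun s a => ∑ h : Fin H,
            (Q h (s h.castSucc) (a h) - Topt P πref r β Q h (s h.castSucc) (a h)))| := by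
  have hP1 h x b : ∑ y, P h x b y = 1 := (hP h x b).2
  have hdag1 h x : ∑ b, πdag h x b = 1 := (hπdag h x).2
  have hsoft1 := sum_softmaxPolicy (S := S) Q
  have hKL := expTraj_sum_log_sub_log_nonneg ρ hρ.1 hP hπdag (softmaxPolicy_pos Q)
    fun h x => (hsoft1 h x).le
  rw [KLret_eq ρ hP1 hdag1 hπrefpos r hβ.ne' Q, KLret_eq ρ hP1 hsoft1 hπrefpos r hβ.ne' Q,
    expTraj_initial_eq ρ hP1 hdag1 hsoft1]
  simp only [sub_self, sum_const_zero, expTraj_zero]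
  set Ddag := expTraj ρ P πdag (fun s a => ∑ h : Fin H,
    (Q h (s h.castSucc) (a h) - Topt P πref r β Q h (s h.castSucc) (a h)))
  set Dsoft := expTraj ρ P (softmaxPolicy Q) (fun s a => ∑ h : Fin H,
    (Q h (s h.castSucc) (a h) - Topt P πref r β Q h (s h.castSucc) (a h)))
  have hD : Dsoft - Ddag ≤ 2 * max |Ddag| |Dsoft| := by
    linarith [le_abs_self Dsoft, neg_abs_le Ddag, le_max_left |Ddag| |Dsoft|,
      le_max_right |Ddag| |Dsoft|]
  linarith [mul_le_mul_of_nonneg_left hD hβ.le, mul_nonneg hβ.le hKL]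

/-- **Suboptimality bound for softmax policies via expected Bellman errors.** For any `Q`
with softmax policy `π̂ := π_Q` and any policy `π†`,
`J_β(π†) − J_β(π̂) ≤ 2β · max_{π ∈ {π†,π̂}} |E_π[Σ_h (Q_h(s_h,a_h) − (T_β Q)_h(s_h,a_h))]|`. -/
theorem suboptimality_of_softmax
    (hH : 0 < H) [∀ i, Nonempty (S i)] [Nonempty A]
    (ρ : S 0 → ℝ) (hρ : IsPMF ρ)
    (P : ∀ h : Fin H, S h.castSucc → A → S h.succ → ℝ)
    (hP : ∀ h s a, IsPMF (P h s a))
    (r : ∀ h : Fin H, S h.castSucc → A → ℝ)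
    (πref : ∀ h : Fin H, S h.castSucc → A → ℝ)
    (hπref : ∀ h s, IsPMF (πref h s)) (hπrefpos : ∀ h s a, 0 < πref h s a)
    (β : ℝ) (hβ : 0 < β)
    (Q : ∀ h : Fin H, S h.castSucc → A → ℝ)
    (πdag : ∀ h : Fin H, S h.castSucc → A → ℝ)
    (hπdag : ∀ h s, IsPMF (πdag h s)) :
    KLret ρ P πref r β πdag - KLret ρ P πref r β (softmaxPolicy Q) ≤
      2 * β * max
        |expTraj ρ P πdag (fun s a => ∑ h : Fin H,
            (Q h (s h.castSucc) (a h) - Topt P πref r β Q h (s h.castSucc) (a h)))|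
        |expTraj ρ P (softmaxPolicy Q) (fun s a => ∑ h : Fin H,
            (Q h (s h.castSucc) (a h) - Topt P πref r β Q h (s h.castSucc) (a h)))| :=
  suboptimality_of_softmax_general ρ hρ P hP r πref hπrefpos β hβ Q πdag hπdag

end TBRM
end
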